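/- Consider a consistent linear system Ax = b with A ∈ ℝ^{m×n} and a solution x*. Let {x^k}_{k≥0} be the randomized block Kaczmarz iterates x^{k+1} = x^k − (A_{J,:})† (A_{J,:} x^k − b_J), where each block J = {j_1, …, j_ℓ} consists of ℓ row indices of A sampled independently with probabilities ||A_{j,:}||₂² / ||A||_F², and x^0 − x* ∈ range(Aᵀ). If σmin⁺(A) denotes the smallest nonzero singular value of A, then E||x^k − x*||₂² ≤ (1 − σmin⁺(A)² / ||A||_F²)^{ℓk} · ||x^0 − x*||₂². -/

import Mathlib

/-!
The error `e = x - x*` stays in the row space of `A`, and a block step replaces it by its residual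
after orthogonal projection onto the row space of `A_{J,:}`. That residual is no longer than the
result of projecting `e` onto the hyperplanes `A_{j,:} x = 0`, `j ∈ J`, one at a time, since both
differ from `e` by an element of the row space of `A_{J,:}`. A single projection onto a row drawn
with probability `‖A_{j,:}‖² / ‖A‖_F²` has expected squared length `‖e‖² - ‖A e‖² / ‖A‖_F²`, and on
the row space `‖A e‖² ≥ λmin⁺(AᵀA) ‖e‖²` (expand `e` in an eigenbasis of `AᵀA`: the row space is
orthogonal to its kernel). So each row contracts `‖e‖²` by `1 - λmin⁺(AᵀA) / ‖A‖_F²` in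
expectation, each block by the `ℓ`-th power of that factor, and `k` independent blocks by the
`ℓk`-th power.
-/

open Matrix

/-- `Mp` is the Moore–Penrose pseudoinverse of `M` (the four Penrose conditions,
which characterize it uniquely). -/
def IsMoorePenrose {k l : Type*} [Fintype k] [Fintype l]
    (M : Matrix k l ℝ) (Mp : Matrix l k ℝ) : Prop :=
  M * Mp * M = M ∧ Mp * M * Mp = Mp ∧ (M * Mp)ᵀ = M * Mp ∧ (Mp * M)ᵀ = Mp * M

/-- The smallest nonzero eigenvalue of a square real matrix
(with junk value `sInf ∅ = 0` if every eigenvalue is zero). -/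
noncomputable def lamMinPos {n : ℕ} (M : Matrix (Fin n) (Fin n) ℝ) : ℝ :=
  sInf {μ : ℝ | μ ≠ 0 ∧ ∃ v : Fin n → ℝ, v ≠ 0 ∧ M *ᵥ v = μ • v}

def frobSq {a b : ℕ} (M : Matrix (Fin a) (Fin b) ℝ) : ℝ := ∑ i, ∑ j, (M i j) ^ 2

/-- The trajectory of an iterative method: `traj step x0 k ω` is the `k`-th iterate
obtained from `x0` using the random draws `ω 0, …, ω (k-1)`. -/
def traj {V I : Type*} (step : I → V → V) (x0 : V) : (k : ℕ) → (Fin k → I) → V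
  | 0, _ => x0
  | k + 1, ω => step (ω (Fin.last k)) (traj step x0 k (Fin.init ω))

open Finset Submodule Set

theorem dotProduct_self_nonneg {ι R : Type*} [Fintype ι] [Ring R] [LinearOrder R]
    [IsStrictOrderedRing R] (v : ι → R) : 0 ≤ v ⬝ᵥ v :=
  sum_nonneg fun i _ => mul_self_nonneg (v i)

theorem dotProduct_self_pos {ι R : Type*} [Fintype ι] [Ring R] [LinearOrder R]
    [IsStrictOrderedRing R] {v : ι → R} (hv : v ≠ 0) : 0 < v ⬝ᵥ v :=
  (dotProduct_self_nonneg v).lt_of_ne' (mt dotProduct_self_eq_zero.1 hv)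

theorem mem_span_range_row_iff {k l R : Type*} [Fintype k] [CommSemiring R]
    {M : Matrix k l R} {v : l → R} : v ∈ span R (range M.row) ↔ ∃ w, Mᵀ *ᵥ w = v := by
  rw [← col_transpose, ← range_mulVecLin]
  rfl

theorem range_row_submatrix_subset {k k' l R : Type*} (M : Matrix k l R) (r : k' → k) :
    range (M.submatrix r id).row ⊆ range M.row := by
  rintro _ ⟨t, rfl⟩
  exact ⟨r t, rfl⟩

section Trajectory

variable {V I : Type*} (step : I → V → V)

theorem traj_snoc (x0 : V) (k : ℕ) (ω : Fin k → I) (i : I) :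
    traj step x0 (k + 1) (Fin.snoc ω i) = step i (traj step x0 k ω) := by
  simp only [traj, Fin.snoc_last, Fin.init_snoc]

theorem traj_mem {S : Set V} (hS : ∀ i, ∀ x ∈ S, step i x ∈ S) {x0 : V} (hx0 : x0 ∈ S) :
    ∀ k (ω : Fin k → I), traj step x0 k ω ∈ S
  | 0, _ => hx0
  | k + 1, ω => hS _ _ (traj_mem hS hx0 k (Fin.init ω))

theorem sum_prod_mul_traj_le [Fintype I] {w : I → ℝ} (hw : ∀ i, 0 ≤ w i) {S : Set V}
    (hS : ∀ i, ∀ x ∈ S, step i x ∈ S) (φ : V → ℝ) {ρ : ℝ} (hρ : 0 ≤ ρ)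
    (hcontract : ∀ x ∈ S, ∑ i, w i * φ (step i x) ≤ ρ * φ x) {x0 : V} (hx0 : x0 ∈ S)
    (k : ℕ) : ∑ ω : Fin k → I, (∏ t, w (ω t)) * φ (traj step x0 k ω) ≤ ρ ^ k * φ x0 := by
  induction k with
  | zero => simp [traj]
  | succ k ih =>
    calc ∑ ω : Fin (k + 1) → I, (∏ t, w (ω t)) * φ (traj step x0 (k + 1) ω)
        = ∑ ω : Fin k → I, (∏ t, w (ω t)) * ∑ i, w i * φ (step i (traj step x0 k ω)) := by
          rw [← (Fin.snocEquiv fun _ => I).sum_comp, Fintype.sum_prod_type, sum_comm]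
          refine sum_congr rfl fun ω _ => ?_
          rw [mul_sum]
          refine sum_congr rfl fun i _ => ?_
          change (∏ t, w (Fin.snoc (α := fun _ => I) ω i t)) *
            φ (traj step x0 (k + 1) (Fin.snoc ω i)) = _
          simp only [traj_snoc, Fin.prod_univ_castSucc, Fin.snoc_castSucc, Fin.snoc_last,
            mul_assoc]
      _ ≤ ∑ ω : Fin k → I, (∏ t, w (ω t)) * (ρ * φ (traj step x0 k ω)) :=
          sum_le_sum fun ω _ => mul_le_mul_of_nonneg_left
            (hcontract _ (traj_mem step hS hx0 k ω)) (prod_nonneg fun _ _ => hw _)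
      _ = ρ * ∑ ω : Fin k → I, (∏ t, w (ω t)) * φ (traj step x0 k ω) := by
          rw [mul_sum]
          exact sum_congr rfl fun ω _ => by ring
      _ ≤ ρ * (ρ ^ k * φ x0) := mul_le_mul_of_nonneg_left ih hρ
      _ = ρ ^ (k + 1) * φ x0 := by ring

end Trajectory

namespace IsMoorePenrose

variable {k l : Type*} [Fintype k] [Fintype l] {M : Matrix k l ℝ} {Mp : Matrix l k ℝ}

theorem mul_mul_transpose (h : IsMoorePenrose M Mp) : Mp * M * Mᵀ = Mᵀ := by
  rw [← h.2.2.2, ← transpose_mul, ← Matrix.mul_assoc, h.1]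

theorem isIdempotentElem (h : IsMoorePenrose M Mp) : IsIdempotentElem (Mp * M) := by
  rw [IsIdempotentElem, ← Matrix.mul_assoc, h.2.1]

theorem mulVec_mem_span_row (h : IsMoorePenrose M Mp) (v : l → ℝ) :
    (Mp * M) *ᵥ v ∈ span ℝ (range M.row) := by
  have hMp : Mp = Mᵀ * (Mpᵀ * Mp) := by
    rw [← Matrix.mul_assoc, ← transpose_mul, h.2.2.2, h.2.1]
  refine mem_span_range_row_iff.2 ⟨(Mpᵀ * Mp * M) *ᵥ v, ?_⟩
  rw [mulVec_mulVec, ← Matrix.mul_assoc, ← hMp]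

/-- `Mp * M` is a symmetric idempotent, so `v - Mp * M v` is orthogonal to `Mp * M v`. -/
theorem dotProduct_sub_mulVec_le (h : IsMoorePenrose M Mp) (v : l → ℝ) :
    (v - (Mp * M) *ᵥ v) ⬝ᵥ (v - (Mp * M) *ᵥ v) ≤ v ⬝ᵥ v := by
  set y := (Mp * M) *ᵥ v
  have hyy : y ⬝ᵥ y = y ⬝ᵥ v := by
    conv_lhs => rw [dotProduct_mulVec, ← h.2.2.2, vecMul_transpose, mulVec_mulVec,
      h.isIdempotentElem.eq]
  have hexpand : (v - y) ⬝ᵥ (v - y) = v ⬝ᵥ v - y ⬝ᵥ y := by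
    rw [sub_dotProduct, dotProduct_sub, dotProduct_sub, dotProduct_comm v y, hyy]
    ring
  linarith [dotProduct_self_nonneg y]

/-- `Mp * M` fixes the row space of `M`, so `e` and `c` have the same residual. -/
theorem dotProduct_sub_mulVec_le_of_sub_mem (h : IsMoorePenrose M Mp) {e c : l → ℝ}
    (hc : c - e ∈ span ℝ (range M.row)) :
    (e - (Mp * M) *ᵥ e) ⬝ᵥ (e - (Mp * M) *ᵥ e) ≤ c ⬝ᵥ c := by
  obtain ⟨w, hw⟩ := mem_span_range_row_iff.1 hc
  have hfix : (Mp * M) *ᵥ (Mᵀ *ᵥ w) = Mᵀ *ᵥ w := by rw [mulVec_mulVec, h.mul_mul_transpose]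
  have hres : e - (Mp * M) *ᵥ e = c - (Mp * M) *ᵥ c := by
    rw [show c = e + Mᵀ *ᵥ w by rw [hw]; abel, mulVec_add, hfix]
    abel
  rw [hres]
  exact h.dotProduct_sub_mulVec_le c

end IsMoorePenrose

theorem OrthonormalBasis.sum_dotProduct_mul_dotProduct {ι : Type*} [Fintype ι]
    (B : OrthonormalBasis ι ℝ (EuclideanSpace ℝ ι)) (x y : ι → ℝ) :
    ∑ i, (⇑(B i) ⬝ᵥ x) * (⇑(B i) ⬝ᵥ y) = x ⬝ᵥ y := by
  have := B.sum_inner_mul_inner (WithLp.toLp 2 x) (WithLp.toLp 2 y)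
  simp only [EuclideanSpace.inner_eq_star_dotProduct, star_trivial] at this
  simpa [dotProduct_comm] using this

theorem Matrix.IsHermitian.dotProduct_mulVec_eq_sum {ι : Type*} [Fintype ι] [DecidableEq ι]
    {S : Matrix ι ι ℝ} (hS : S.IsHermitian) (e : ι → ℝ) :
    e ⬝ᵥ S *ᵥ e = ∑ i, hS.eigenvalues i * (⇑(hS.eigenvectorBasis i) ⬝ᵥ e) ^ 2 := by
  have hSymm : Sᵀ = S := by rw [← conjTranspose_eq_transpose_of_trivial]; exact hS
  rw [← hS.eigenvectorBasis.sum_dotProduct_mul_dotProduct e (S *ᵥ e)]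
  refine sum_congr rfl fun i _ => ?_
  rw [dotProduct_mulVec, ← mulVec_transpose, hSymm, hS.mulVec_eigenvectorBasis, smul_dotProduct,
    smul_eq_mul]
  ring

/-- Projection onto the hyperplane `a ⬝ᵥ x = 0`; since `x / 0 = 0` it is the identity when
`a = 0`. -/
noncomputable def projPerp {ι : Type*} [Fintype ι] (a e : ι → ℝ) : ι → ℝ :=
  e - ((a ⬝ᵥ e) / (a ⬝ᵥ a)) • a

theorem dotProduct_self_mul_projPerp {ι : Type*} [Fintype ι] (a e : ι → ℝ) :
    (a ⬝ᵥ a) * (projPerp a e ⬝ᵥ projPerp a e) = (a ⬝ᵥ a) * (e ⬝ᵥ e) - (a ⬝ᵥ e) ^ 2 := by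
  rcases eq_or_ne a 0 with rfl | ha
  · simp
  · have := (dotProduct_self_pos ha).ne'
    simp only [projPerp, sub_dotProduct, dotProduct_sub, smul_dotProduct, dotProduct_smul,
      smul_eq_mul, dotProduct_comm e a]
    field_simp
    ring

section RowSpace

variable {m n : ℕ} (A : Matrix (Fin m) (Fin n) ℝ)

theorem dotProduct_transpose_mul_self_mulVec (v : Fin n → ℝ) :
    v ⬝ᵥ (Aᵀ * A) *ᵥ v = (A *ᵥ v) ⬝ᵥ (A *ᵥ v) := by
  rw [← mulVec_mulVec, dotProduct_mulVec, vecMul_transpose]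

theorem mul_dotProduct_self_eq_of_mulVec_eq_smul {μ : ℝ} {v : Fin n → ℝ}
    (h : (Aᵀ * A) *ᵥ v = μ • v) : μ * (v ⬝ᵥ v) = (A *ᵥ v) ⬝ᵥ (A *ᵥ v) := by
  rw [← dotProduct_transpose_mul_self_mulVec, h, dotProduct_smul, smul_eq_mul]

theorem lamMinPos_transpose_mul_self_le {μ : ℝ} {v : Fin n → ℝ} (hμ : μ ≠ 0) (hv : v ≠ 0)
    (h : (Aᵀ * A) *ᵥ v = μ • v) : lamMinPos (Aᵀ * A) ≤ μ := by
  refine csInf_le ⟨0, ?_⟩ ⟨hμ, v, hv, h⟩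
  rintro ν ⟨-, w, hw, hνw⟩
  refine nonneg_of_mul_nonneg_left ?_ (dotProduct_self_pos hw)
  rw [mul_dotProduct_self_eq_of_mulVec_eq_smul A hνw]
  exact dotProduct_self_nonneg _

theorem frobSq_eq_sum_dotProduct : frobSq A = ∑ j, A j ⬝ᵥ A j := by
  simp only [frobSq, dotProduct, sq]

theorem frobSq_nonneg : 0 ≤ frobSq A := by
  rw [frobSq_eq_sum_dotProduct]
  exact sum_nonneg fun j _ => dotProduct_self_nonneg (A j)

theorem mulVec_dotProduct_self_eq_sum (v : Fin n → ℝ) :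
    (A *ᵥ v) ⬝ᵥ (A *ᵥ v) = ∑ j, (A j ⬝ᵥ v) ^ 2 := by
  simp only [dotProduct, mulVec, sq]

theorem mulVec_dotProduct_self_le (v : Fin n → ℝ) :
    (A *ᵥ v) ⬝ᵥ (A *ᵥ v) ≤ frobSq A * (v ⬝ᵥ v) := by
  rw [mulVec_dotProduct_self_eq_sum, frobSq_eq_sum_dotProduct, sum_mul]
  gcongr with j
  simpa only [dotProduct, sq] using sum_mul_sq_le_sq_mul_sq univ (A j) v

theorem lamMinPos_transpose_mul_self_le_frobSq : lamMinPos (Aᵀ * A) ≤ frobSq A := by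
  rcases Set.eq_empty_or_nonempty
      {μ : ℝ | μ ≠ 0 ∧ ∃ v : Fin n → ℝ, v ≠ 0 ∧ (Aᵀ * A) *ᵥ v = μ • v}
    with hempty | ⟨μ, hμ, v, hv, h⟩
  · rw [lamMinPos, hempty, Real.sInf_empty]
    exact frobSq_nonneg A
  · refine (lamMinPos_transpose_mul_self_le A hμ hv h).trans
      (le_of_mul_le_mul_right ?_ (dotProduct_self_pos hv))
    rw [mul_dotProduct_self_eq_of_mulVec_eq_smul A h]
    exact mulVec_dotProduct_self_le A v

theorem lamMinPos_mul_dotProduct_self_le {e : Fin n → ℝ} (he : e ∈ span ℝ (range A.row)) :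
    lamMinPos (Aᵀ * A) * (e ⬝ᵥ e) ≤ (A *ᵥ e) ⬝ᵥ (A *ᵥ e) := by
  have hS : (Aᵀ * A).IsHermitian := by
    simpa [conjTranspose_eq_transpose_of_trivial] using isHermitian_conjTranspose_mul_self A
  have hBd := hS.mulVec_eigenvectorBasis
  have hsum := hS.dotProduct_mulVec_eq_sum
  set B := hS.eigenvectorBasis
  set d := hS.eigenvalues
  obtain ⟨u, rfl⟩ := mem_span_range_row_iff.1 he
  -- the row space is orthogonal to the kernel of `Aᵀ * A`
  have hker : ∀ i, d i = 0 → ⇑(B i) ⬝ᵥ Aᵀ *ᵥ u = 0 := by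
    intro i hi
    have hAB : A *ᵥ B i = 0 := by
      rw [← dotProduct_self_eq_zero, ← dotProduct_transpose_mul_self_mulVec, hBd, hi, zero_smul,
        dotProduct_zero]
    rw [dotProduct_mulVec, vecMul_transpose, hAB, zero_dotProduct]
  have hlow : ∀ i, d i ≠ 0 → lamMinPos (Aᵀ * A) ≤ d i := fun i hi =>
    lamMinPos_transpose_mul_self_le A hi (fun h => B.orthonormal.ne_zero i (by simpa using h))
      (hBd i)
  calc lamMinPos (Aᵀ * A) * ((Aᵀ *ᵥ u) ⬝ᵥ (Aᵀ *ᵥ u))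
      = ∑ i, lamMinPos (Aᵀ * A) * (⇑(B i) ⬝ᵥ Aᵀ *ᵥ u) ^ 2 := by
        rw [← B.sum_dotProduct_mul_dotProduct, mul_sum]
        simp only [sq]
    _ ≤ ∑ i, d i * (⇑(B i) ⬝ᵥ Aᵀ *ᵥ u) ^ 2 := by
        refine sum_le_sum fun i _ => ?_
        rcases eq_or_ne (d i) 0 with hi | hi
        · simp [hker i hi]
        · exact mul_le_mul_of_nonneg_right (hlow i hi) (sq_nonneg _)
    _ = (A *ᵥ (Aᵀ *ᵥ u)) ⬝ᵥ (A *ᵥ (Aᵀ *ᵥ u)) := by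
        rw [← hsum, dotProduct_transpose_mul_self_mulVec]

noncomputable def rowProb (j : Fin m) : ℝ := A j ⬝ᵥ A j / frobSq A

noncomputable def kaczmarzRate : ℝ := 1 - lamMinPos (Aᵀ * A) / frobSq A

theorem rowProb_nonneg (j : Fin m) : 0 ≤ rowProb A j :=
  div_nonneg (dotProduct_self_nonneg _) (frobSq_nonneg A)

theorem kaczmarzRate_nonneg : 0 ≤ kaczmarzRate A :=
  sub_nonneg.2 (div_le_one_of_le₀ (lamMinPos_transpose_mul_self_le_frobSq A) (frobSq_nonneg A))

theorem projPerp_mem_span_row {e : Fin n → ℝ} (he : e ∈ span ℝ (range A.row)) (j : Fin m) :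
    projPerp (A j) e ∈ span ℝ (range A.row) :=
  sub_mem he (smul_mem _ _ (subset_span ⟨j, rfl⟩))

theorem sum_rowProb_mul_projPerp (e : Fin n → ℝ) :
    ∑ j, rowProb A j * (projPerp (A j) e ⬝ᵥ projPerp (A j) e) =
      (frobSq A * (e ⬝ᵥ e) - (A *ᵥ e) ⬝ᵥ (A *ᵥ e)) / frobSq A := by
  simp only [rowProb, div_mul_eq_mul_div, dotProduct_self_mul_projPerp, ← sum_div,
    sum_sub_distrib, ← sum_mul, ← frobSq_eq_sum_dotProduct, mulVec_dotProduct_self_eq_sum]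

theorem sum_rowProb_mul_projPerp_le {e : Fin n → ℝ} (he : e ∈ span ℝ (range A.row)) :
    ∑ j, rowProb A j * (projPerp (A j) e ⬝ᵥ projPerp (A j) e) ≤ kaczmarzRate A * (e ⬝ᵥ e) := by
  rw [sum_rowProb_mul_projPerp, kaczmarzRate]
  rcases (frobSq_nonneg A).eq_or_lt with hF | hF
  · rw [← hF, div_zero, div_zero, sub_zero, one_mul]
    exact dotProduct_self_nonneg e
  · have hrate : (1 - lamMinPos (Aᵀ * A) / frobSq A) * (e ⬝ᵥ e) * frobSq A =
        frobSq A * (e ⬝ᵥ e) - lamMinPos (Aᵀ * A) * (e ⬝ᵥ e) := by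
      field_simp
    rw [div_le_iff₀ hF, hrate]
    linarith [lamMinPos_mul_dotProduct_self_le A he]

theorem traj_projPerp_sub_mem_span_row {l : ℕ} (J : Fin l → Fin m) (e : Fin n → ℝ) :
    traj (fun j => projPerp (A j)) e l J - e ∈ span ℝ (range (A.submatrix J id).row) := by
  induction l with
  | zero => simp [traj]
  | succ l ih =>
    rw [traj, projPerp, sub_right_comm]
    exact sub_mem (span_mono (range_row_submatrix_subset _ Fin.castSucc) (ih _))
      (smul_mem _ _ (subset_span ⟨Fin.last l, rfl⟩))

/-- The block residual is no longer than the result of projecting onto the rows of the block one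
at a time. -/
theorem sum_prod_rowProb_mul_residual_le {l : ℕ}
    {pJ : (Fin l → Fin m) → Matrix (Fin n) (Fin l) ℝ}
    (hpJ : ∀ J, IsMoorePenrose (A.submatrix J id) (pJ J)) {e : Fin n → ℝ}
    (he : e ∈ span ℝ (range A.row)) :
    ∑ J : Fin l → Fin m, (∏ t, rowProb A (J t)) *
        ((e - (pJ J * A.submatrix J id) *ᵥ e) ⬝ᵥ (e - (pJ J * A.submatrix J id) *ᵥ e)) ≤
      kaczmarzRate A ^ l * (e ⬝ᵥ e) :=
  calc _ ≤ ∑ J : Fin l → Fin m, (∏ t, rowProb A (J t)) *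
          (traj (fun j => projPerp (A j)) e l J ⬝ᵥ traj (fun j => projPerp (A j)) e l J) :=
        sum_le_sum fun J _ => mul_le_mul_of_nonneg_left
          ((hpJ J).dotProduct_sub_mulVec_le_of_sub_mem (traj_projPerp_sub_mem_span_row A J e))
          (prod_nonneg fun _ _ => rowProb_nonneg A _)
    _ ≤ _ := sum_prod_mul_traj_le _ (rowProb_nonneg A) (fun j _ hx => projPerp_mem_span_row A hx j)
          (fun x => x ⬝ᵥ x) (kaczmarzRate_nonneg A)
          (fun _ hx => sum_rowProb_mul_projPerp_le A hx) he l

end RowSpace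

theorem stmt_10_general {m n l : ℕ}
    (A : Matrix (Fin m) (Fin n) ℝ) (b : Fin m → ℝ)
    (xstar : Fin n → ℝ) (hxstar : A *ᵥ xstar = b)
    (x0 : Fin n → ℝ) (hx0 : ∃ u : Fin m → ℝ, x0 - xstar = Aᵀ *ᵥ u)
    -- `pJ J = (A_{J,:})†` for a block `J` of `ℓ` row indices
    (pJ : (Fin l → Fin m) → Matrix (Fin n) (Fin l) ℝ)
    (hpJ : ∀ J : Fin l → Fin m, IsMoorePenrose (A.submatrix J id) (pJ J))
    -- the block Kaczmarz update
    (step : (Fin l → Fin m) → (Fin n → ℝ) → (Fin n → ℝ))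
    (hstep : ∀ (J : Fin l → Fin m) (x : Fin n → ℝ),
      step J x = x - pJ J *ᵥ (A.submatrix J id *ᵥ x - fun t => b (J t)))
    -- the row sampling probabilities
    (p : Fin m → ℝ) (hp : ∀ j, p j = (∑ c, (A j c) ^ 2) / frobSq A) :
    ∀ k : ℕ,
      ∑ ω : Fin k → (Fin l → Fin m), (∏ i, ∏ t, p (ω i t)) *
          ((traj step x0 k ω - xstar) ⬝ᵥ (traj step x0 k ω - xstar)) ≤
        (1 - lamMinPos (Aᵀ * A) / frobSq A) ^ (l * k) *
          ((x0 - xstar) ⬝ᵥ (x0 - xstar)) := by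
  intro k
  obtain rfl : p = rowProb A := funext fun j => by simp only [hp, rowProb, dotProduct, sq]
  have herr : ∀ J x, step J x - xstar =
      (x - xstar) - (pJ J * A.submatrix J id) *ᵥ (x - xstar) := by
    intro J x
    have hb : (fun t => b (J t)) = A.submatrix J id *ᵥ xstar := by rw [← hxstar]; rfl
    rw [hstep, hb, ← mulVec_sub, mulVec_mulVec]
    abel
  rw [pow_mul]
  refine sum_prod_mul_traj_le step (w := fun J => ∏ t, rowProb A (J t))
    (fun J => prod_nonneg fun t _ => rowProb_nonneg A (J t))
    (S := {x | x - xstar ∈ span ℝ (range A.row)}) ?_ (fun x => (x - xstar) ⬝ᵥ (x - xstar))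
    (pow_nonneg (kaczmarzRate_nonneg A) l) ?_ ?_ k
  · intro J x hx
    change step J x - xstar ∈ span ℝ (range A.row)
    rw [herr]
    exact sub_mem hx (span_mono (range_row_submatrix_subset A J) ((hpJ J).mulVec_mem_span_row _))
  · intro x hx
    simp only [herr]
    exact sum_prod_rowProb_mul_residual_le A hpJ hx
  · obtain ⟨u, hu⟩ := hx0
    exact mem_span_range_row_iff.2 ⟨u, hu.symm⟩

/-- randomized block Kaczmarz rate. With blocks of `ℓ` rows sampled
i.i.d. with probabilities `‖A_{j,:}‖₂²/‖A‖_F²` and the update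
`x^{k+1} = x^k − (A_{J,:})†(A_{J,:}x^k − b_J)`, one has
`E‖x^k − x*‖₂² ≤ (1 − σmin⁺(A)²/‖A‖_F²)^{ℓk} ‖x^0 − x*‖₂²`, where
`σmin⁺(A)² = λmin⁺(AᵀA)`. -/
theorem stmt_10 {m n l : ℕ}
    (A : Matrix (Fin m) (Fin n) ℝ) (b : Fin m → ℝ)
    (hconsistent : ∃ x, A *ᵥ x = b)
    (xstar : Fin n → ℝ) (hxstar : A *ᵥ xstar = b)
    (x0 : Fin n → ℝ) (hx0 : ∃ u : Fin m → ℝ, x0 - xstar = Aᵀ *ᵥ u)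
    -- `pJ J = (A_{J,:})†` for a block `J` of `ℓ` row indices
    (pJ : (Fin l → Fin m) → Matrix (Fin n) (Fin l) ℝ)
    (hpJ : ∀ J : Fin l → Fin m, IsMoorePenrose (A.submatrix J id) (pJ J))
    -- the block Kaczmarz update
    (step : (Fin l → Fin m) → (Fin n → ℝ) → (Fin n → ℝ))
    (hstep : ∀ (J : Fin l → Fin m) (x : Fin n → ℝ),
      step J x = x - pJ J *ᵥ (A.submatrix J id *ᵥ x - fun t => b (J t)))
    -- the row sampling probabilities
    (p : Fin m → ℝ) (hp : ∀ j, p j = (∑ c, (A j c) ^ 2) / frobSq A) :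
    ∀ k : ℕ,
      ∑ ω : Fin k → (Fin l → Fin m), (∏ i, ∏ t, p (ω i t)) *
          ((traj step x0 k ω - xstar) ⬝ᵥ (traj step x0 k ω - xstar)) ≤
        (1 - lamMinPos (Aᵀ * A) / frobSq A) ^ (l * k) *
          ((x0 - xstar) ⬝ᵥ (x0 - xstar)) :=
  stmt_10_general A b xstar hxstar x0 hx0 pJ hpJ step hstep p hp
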